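/- arXiv:2002.00087 — 2 statements merged into one kernel-verified Lean document; each statement's English description precedes it below -/
import Mathlib

section
/- Let M, Γ₁, …, Γ_L be D×D nonsingular integer matrices that are pairwise commutative and pairwise coprime, and set M_i = MΓ_i for 1 ≤ i ≤ L. Then R = MΓ₁Γ₂⋯Γ_L U is an lcrm of M₁, …, M_L for any unimodular matrix U, and every integer vector m ∈ 𝒩(R) is uniquely determined by its remainders r_i = ⟨m⟩_{M_i}, 1 ≤ i ≤ L. -/
open Matrix

/-- An integer matrix is unimodular if its determinant is `1` or `-1`. -/
def Unimod {D : ℕ} (U : Matrix (Fin D) (Fin D) ℤ) : Prop := U.det = 1 ∨ U.det = -1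

/-- `C` is a common right multiple (crm) of the family `M`. -/
def IsCRM {D n : ℕ} (M : Fin n → Matrix (Fin D) (Fin D) ℤ)
    (C : Matrix (Fin D) (Fin D) ℤ) : Prop :=
  C.det ≠ 0 ∧ ∀ i, ∃ Q : Matrix (Fin D) (Fin D) ℤ, C = M i * Q

/-- `C` is a least common right multiple (lcrm) of the family `M`. -/
def IsLCRM {D n : ℕ} (M : Fin n → Matrix (Fin D) (Fin D) ℤ)
    (C : Matrix (Fin D) (Fin D) ℤ) : Prop :=
  IsCRM M C ∧ ∀ C', IsCRM M C' → ∃ P : Matrix (Fin D) (Fin D) ℤ, C' = C * P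

/-- `C` is a common left multiple (clm) of the family `M`. -/
def IsCLM {D n : ℕ} (M : Fin n → Matrix (Fin D) (Fin D) ℤ)
    (C : Matrix (Fin D) (Fin D) ℤ) : Prop :=
  C.det ≠ 0 ∧ ∀ i, ∃ Q : Matrix (Fin D) (Fin D) ℤ, C = Q * M i

/-- `C` is a least common left multiple (lclm) of the family `M`. -/
def IsLCLM {D n : ℕ} (M : Fin n → Matrix (Fin D) (Fin D) ℤ)
    (C : Matrix (Fin D) (Fin D) ℤ) : Prop :=
  IsCLM M C ∧ ∀ C', IsCLM M C' → ∃ P : Matrix (Fin D) (Fin D) ℤ, C' = P * C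

/-- `B` is a common left divisor (cld) of the family `M`. -/
def IsCLD {D n : ℕ} (M : Fin n → Matrix (Fin D) (Fin D) ℤ)
    (B : Matrix (Fin D) (Fin D) ℤ) : Prop :=
  B.det ≠ 0 ∧ ∀ i, ∃ K : Matrix (Fin D) (Fin D) ℤ, M i = B * K

/-- `B` is a greatest common left divisor (gcld) of the family `M`:
`B` is a cld, and every cld of the family is a left divisor of `B`. -/
def IsGCLD {D n : ℕ} (M : Fin n → Matrix (Fin D) (Fin D) ℤ)
    (B : Matrix (Fin D) (Fin D) ℤ) : Prop :=
  IsCLD M B ∧ ∀ B', IsCLD M B' → ∃ K : Matrix (Fin D) (Fin D) ℤ, B = B' * K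

/-- `A` and `B` are left coprime: every (nonsingular) common left divisor is unimodular. -/
def LeftCoprime {D : ℕ} (A B : Matrix (Fin D) (Fin D) ℤ) : Prop :=
  ∀ C : Matrix (Fin D) (Fin D) ℤ, C.det ≠ 0 →
    (∃ K, A = C * K) → (∃ K, B = C * K) → Unimod C

/-- `A` and `B` are right coprime: every (nonsingular) common right divisor is unimodular. -/
def RightCoprime {D : ℕ} (A B : Matrix (Fin D) (Fin D) ℤ) : Prop :=
  ∀ C : Matrix (Fin D) (Fin D) ℤ, C.det ≠ 0 →
    (∃ K, A = K * C) → (∃ K, B = K * C) → Unimod C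

/-- `A` and `B` are coprime (for commuting matrices left and right coprimeness coincide). -/
def MatCoprime {D : ℕ} (A B : Matrix (Fin D) (Fin D) ℤ) : Prop :=
  LeftCoprime A B ∧ RightCoprime A B

/-- The lattice generated by an integer matrix `M`: all integer combinations `M n`. -/
def LAT {D : ℕ} (M : Matrix (Fin D) (Fin D) ℤ) : Set (Fin D → ℤ) :=
  {v | ∃ n : Fin D → ℤ, v = M.mulVec n}

/-- `𝒩(M)`: the integer vectors of the form `M x` with `x ∈ [0,1)^D`. -/
def NSet {D : ℕ} (M : Matrix (Fin D) (Fin D) ℤ) : Set (Fin D → ℤ) :=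
  {k | ∃ x : Fin D → ℚ, (∀ j, 0 ≤ x j ∧ x j < 1) ∧
      (M.map (Int.cast : ℤ → ℚ)).mulVec x = fun j => (k j : ℚ)}

/-- `r` is the remainder of `m` modulo `M`: `r ∈ 𝒩(M)` and `m − r ∈ LAT(M)`. -/
def IsRem {D : ℕ} (M : Matrix (Fin D) (Fin D) ℤ) (m r : Fin D → ℤ) : Prop :=
  r ∈ NSet M ∧ (m - r) ∈ LAT M

/-- The Euclidean norm on `ℝ^D`. -/
noncomputable def euclNorm {D : ℕ} (v : Fin D → ℝ) : ℝ := Real.sqrt (∑ j, (v j) ^ 2)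

/-- The lattice generated by a real matrix `M`: all integer combinations `M n`. -/
def LATR {D : ℕ} (M : Matrix (Fin D) (Fin D) ℝ) : Set (Fin D → ℝ) :=
  {v | ∃ n : Fin D → ℤ, v = M.mulVec (fun j => (n j : ℝ))}

/-!
If `A` is nonsingular and right coprime to `B`, there is a Bézout identity `Z₁ A + Z₂ B = 1`: the
lattice spanned by the rows of `A` and `B` is the row lattice of a square matrix `H`, which is a
common right divisor of `A` and `B` and hence unimodular. With such an identity, a common right
multiple `X = A₁ Q₁ = A₂ Q₂` of commuting `A₁, A₂` is a right multiple of `A₁ A₂`. Since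
coprimality passes to products, induction along `Γ₁ ⋯ Γ_L` and cancellation of `M` show that every
common right multiple of the `M Γᵢ` (also a single column, i.e. a vector in every `LAT (M Γᵢ)`) is a
right multiple of `R`. Finally two points of `𝒩(R)` that differ by `R n` coincide, as `n` has
entries in `(-1, 1)`.
-/

section Divisibility

variable {D : ℕ}

theorem unimod_iff_isUnit (U : Matrix (Fin D) (Fin D) ℤ) : Unimod U ↔ IsUnit U := by
  rw [isUnit_iff_isUnit_det, Int.isUnit_iff]; rfl

theorem eq_of_mul_eq_mul_of_det_ne_zero {ι : Type*} {A : Matrix (Fin D) (Fin D) ℤ}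
    {X Y : Matrix (Fin D) ι ℤ} (hA : A.det ≠ 0) (h : A * X = A * Y) : X = Y := by
  have h' := congrArg (adjugate A * ·) h
  simp only [← Matrix.mul_assoc, adjugate_mul, smul_mul, Matrix.one_mul] at h'
  ext i j
  exact mul_left_cancel₀ hA (by simpa using congr_fun₂ h' i j)

theorem vecMul_injective_of_det_ne_zero {A : Matrix (Fin D) (Fin D) ℤ} (hA : A.det ≠ 0) :
    Function.Injective fun v => v ᵥ* A := by
  simp_rw [← mulVec_transpose]
  exact mulVec_injective_of_det_ne_zero (by rwa [det_transpose])

theorem row_mem_range_vecMulLinear (A : Matrix (Fin D) (Fin D) ℤ) (i : Fin D) :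
    A i ∈ LinearMap.range A.vecMulLinear := by
  rw [range_vecMulLinear]
  exact Submodule.subset_span ⟨i, rfl⟩

theorem exists_eq_mul_of_forall_mem_range {X C : Matrix (Fin D) (Fin D) ℤ}
    (h : ∀ i, X i ∈ LinearMap.range C.vecMulLinear) : ∃ K, X = K * C := by
  choose K hK using h
  exact ⟨of K, by ext i j; simp [← hK i, vecMul, dotProduct, mul_apply]⟩

theorem exists_eq_mul_add_mul_of_forall_mem_sup {X A B : Matrix (Fin D) (Fin D) ℤ}
    (h : ∀ i, X i ∈ LinearMap.range A.vecMulLinear ⊔ LinearMap.range B.vecMulLinear) :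
    ∃ Z₁ Z₂, X = Z₁ * A + Z₂ * B := by
  choose y hy z hz hyz using fun i => Submodule.mem_sup.mp (h i)
  obtain ⟨Z₁, hZ₁⟩ := exists_eq_mul_of_forall_mem_range (X := of y) hy
  obtain ⟨Z₂, hZ₂⟩ := exists_eq_mul_of_forall_mem_range (X := of z) hz
  exact ⟨Z₁, Z₂, by rw [← hZ₁, ← hZ₂]; ext i j; simp [← hyz i]⟩

theorem exists_range_vecMulLinear_eq {A : Matrix (Fin D) (Fin D) ℤ} (hA : A.det ≠ 0)
    {S : Submodule ℤ (Fin D → ℤ)} (hAS : LinearMap.range A.vecMulLinear ≤ S) :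
    ∃ H : Matrix (Fin D) (Fin D) ℤ, LinearMap.range H.vecMulLinear = S := by
  have hrank : Module.finrank ℤ S = D := by
    refine le_antisymm (by simpa using S.finrank_le) ?_
    calc D = Module.finrank ℤ (LinearMap.range A.vecMulLinear) := by
          rw [LinearMap.finrank_range_of_inj (vecMul_injective_of_det_ne_zero hA)]; simp
      _ ≤ Module.finrank ℤ S := Submodule.finrank_mono hAS
  let b := Module.finBasisOfFinrankEq ℤ S hrank
  refine ⟨of fun i => (b i : Fin D → ℤ), ?_⟩
  rw [range_vecMulLinear]
  have : Set.range (of fun i => (b i : Fin D → ℤ)).row = S.subtype '' Set.range b := by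
    rw [← Set.range_comp]; rfl
  rw [this, Submodule.span_image, b.span_eq, Submodule.map_top, Submodule.range_subtype]

theorem RightCoprime.exists_mul_add_mul_eq_one {A B : Matrix (Fin D) (Fin D) ℤ}
    (hA : A.det ≠ 0) (hAB : RightCoprime A B) : ∃ Z₁ Z₂, Z₁ * A + Z₂ * B = 1 := by
  obtain ⟨H, hH⟩ := exists_range_vecMulLinear_eq hA
    (le_sup_left : LinearMap.range A.vecMulLinear ≤ _ ⊔ LinearMap.range B.vecMulLinear)
  obtain ⟨K, hK⟩ := exists_eq_mul_of_forall_mem_range fun i =>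
    hH ▸ Submodule.mem_sup_left (row_mem_range_vecMulLinear A i)
  obtain ⟨K', hK'⟩ := exists_eq_mul_of_forall_mem_range fun i =>
    hH ▸ Submodule.mem_sup_right (row_mem_range_vecMulLinear B i)
  have hHdet : H.det ≠ 0 := fun h0 => hA (by rw [hK, det_mul, h0, mul_zero])
  have hHunit : IsUnit H := (unimod_iff_isUnit H).mp (hAB H hHdet ⟨K, hK⟩ ⟨K', hK'⟩)
  obtain ⟨Z₁, Z₂, hZ⟩ := exists_eq_mul_add_mul_of_forall_mem_sup fun i =>
    hH ▸ row_mem_range_vecMulLinear H i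
  refine ⟨H⁻¹ * Z₁, H⁻¹ * Z₂, ?_⟩
  rw [Matrix.mul_assoc, Matrix.mul_assoc, ← Matrix.mul_add, ← hZ,
    nonsing_inv_mul _ ((isUnit_iff_isUnit_det H).mp hHunit)]

theorem rightCoprime_list_prod {G : Matrix (Fin D) (Fin D) ℤ} (hG : G.det ≠ 0) :
    ∀ l : List (Matrix (Fin D) (Fin D) ℤ), (∀ B ∈ l, Commute G B ∧ RightCoprime G B) →
      RightCoprime G l.prod
  | [], _, C, _, _, ⟨K, hK⟩ => by
    rw [unimod_iff_isUnit]
    exact IsUnit.of_mul_eq_one_right K hK.symm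
  | B :: t, h, C, hC, ⟨K₁, hK₁⟩, ⟨K₂, hK₂⟩ => by
    obtain ⟨Z₁, Z₂, hZ⟩ := (h B List.mem_cons_self).2.exists_mul_add_mul_eq_one hG
    have hGt : Commute G t.prod := Commute.list_prod_right _ _ fun B hB => (h B (by simp [hB])).1
    refine rightCoprime_list_prod hG t (fun B hB => h B (by simp [hB])) C hC ⟨K₁, hK₁⟩
      ⟨Z₁ * t.prod * K₁ + Z₂ * K₂, ?_⟩
    rw [List.prod_cons] at hK₂
    calc t.prod = (Z₁ * G + Z₂ * B) * t.prod := by rw [hZ, Matrix.one_mul]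
      _ = Z₁ * t.prod * G + Z₂ * (B * t.prod) := by
        rw [Matrix.add_mul, Matrix.mul_assoc, hGt.eq, Matrix.mul_assoc, Matrix.mul_assoc]
      _ = (Z₁ * t.prod * K₁ + Z₂ * K₂) * C := by
        simp only [hK₁, hK₂, Matrix.add_mul, Matrix.mul_assoc]

theorem eq_mul_mul_of_mul_add_mul_eq_one {ι : Type*} {A₁ A₂ Z₁ Z₂ : Matrix (Fin D) (Fin D) ℤ}
    {X Q₁ Q₂ : Matrix (Fin D) ι ℤ} (hA₂ : A₂.det ≠ 0) (hc : Commute A₁ A₂)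
    (hZ : Z₁ * A₁ + Z₂ * A₂ = 1) (hX₁ : X = A₁ * Q₁) (hX₂ : X = A₂ * Q₂) :
    X = A₁ * A₂ * (Z₁ * Q₂ + Z₂ * Q₁) := by
  suffices hW : A₂ * (Z₁ * Q₂ + Z₂ * Q₁) = Q₁ by rw [hX₁, Matrix.mul_assoc, hW]
  let f := Int.castRingHom ℚ
  apply Matrix.map_injective (f := f) (RingHom.injective_int f)
  have hu : IsUnit (A₂.map f).det := by
    rw [← RingHom.mapMatrix_apply, ← RingHom.map_det]
    exact isUnit_iff_ne_zero.mpr (by simpa [f] using hA₂)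
  -- Over `ℚ`, `Y = A₂⁻¹ Q₁` satisfies `A₂ Y = Q₁` and `A₁ Y = Q₂`,
  -- so `Y = (Z₁ A₁ + Z₂ A₂) Y = Z₁ Q₂ + Z₂ Q₁` is integral.
  set Y := (A₂.map f)⁻¹ * Q₁.map f
  have hY₁ : A₂.map f * Y = Q₁.map f := by
    rw [← Matrix.mul_assoc, mul_nonsing_inv _ hu, Matrix.one_mul]
  have hY₂ : A₁.map f * Y = Q₂.map f :=
    calc A₁.map f * Y = (A₂.map f)⁻¹ * ((A₂ * A₁).map f * Y) := by
          rw [Matrix.map_mul, Matrix.mul_assoc, ← Matrix.mul_assoc _ (A₂.map f),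
            nonsing_inv_mul _ hu, Matrix.one_mul]
      _ = (A₂.map f)⁻¹ * (A₂.map f * Q₂.map f) := by
          rw [← hc.eq, Matrix.map_mul, Matrix.mul_assoc, hY₁, ← Matrix.map_mul, ← Matrix.map_mul,
            ← hX₁, hX₂]
      _ = Q₂.map f := by rw [← Matrix.mul_assoc, nonsing_inv_mul _ hu, Matrix.one_mul]
  have hYW : Y = (Z₁ * Q₂ + Z₂ * Q₁).map f :=
    calc Y = (Z₁ * A₁ + Z₂ * A₂).map f * Y := by
          rw [hZ, ← RingHom.mapMatrix_apply, map_one, Matrix.one_mul]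
      _ = (Z₁ * Q₂ + Z₂ * Q₁).map f := by
          simp only [Matrix.map_add _ (map_add f), Matrix.map_mul, Matrix.add_mul,
            Matrix.mul_assoc, hY₁, hY₂]
  show (A₂ * (Z₁ * Q₂ + Z₂ * Q₁)).map f = Q₁.map f
  rw [Matrix.map_mul, ← hYW, hY₁]

theorem det_list_prod_ne_zero {l : List (Matrix (Fin D) (Fin D) ℤ)} (h : ∀ G ∈ l, G.det ≠ 0) :
    l.prod.det ≠ 0 := by
  rw [← coe_detMonoidHom, map_list_prod, Ne, List.prod_eq_zero_iff]
  simpa using fun G hG h0 => h G hG h0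

theorem exists_list_prod_eq_mul_of_mem {G : Matrix (Fin D) (Fin D) ℤ} :
    ∀ {l : List (Matrix (Fin D) (Fin D) ℤ)}, l.Pairwise Commute → G ∈ l → ∃ T, l.prod = G * T
  | B :: t, hl, hG => by
    rw [List.pairwise_cons] at hl
    rcases List.mem_cons.mp hG with rfl | hGt
    · exact ⟨t.prod, List.prod_cons⟩
    · obtain ⟨T, hT⟩ := exists_list_prod_eq_mul_of_mem hl.2 hGt
      refine ⟨B * T, ?_⟩
      rw [List.prod_cons, hT, ← Matrix.mul_assoc, (hl.1 G hGt).eq, Matrix.mul_assoc]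

theorem exists_eq_list_prod_mul {ι : Type*} :
    ∀ {l : List (Matrix (Fin D) (Fin D) ℤ)}, (∀ G ∈ l, G.det ≠ 0) →
      l.Pairwise (fun A B => Commute A B ∧ RightCoprime A B) →
      ∀ X : Matrix (Fin D) ι ℤ, (∀ G ∈ l, ∃ Q : Matrix (Fin D) ι ℤ, X = G * Q) →
        ∃ W : Matrix (Fin D) ι ℤ, X = l.prod * W
  | [], _, _, X, _ => ⟨X, by rw [List.prod_nil, Matrix.one_mul]⟩
  | G :: t, hdet, hpw, X, hX => by
    rw [List.pairwise_cons] at hpw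
    obtain ⟨W, hW⟩ := exists_eq_list_prod_mul (fun B hB => hdet B (by simp [hB])) hpw.2 X
      fun B hB => hX B (by simp [hB])
    obtain ⟨Q, hQ⟩ := hX G List.mem_cons_self
    have hG : G.det ≠ 0 := hdet G List.mem_cons_self
    obtain ⟨Z₁, Z₂, hZ⟩ := (rightCoprime_list_prod hG t hpw.1).exists_mul_add_mul_eq_one hG
    rw [List.prod_cons]
    exact ⟨_, eq_mul_mul_of_mul_add_mul_eq_one
      (det_list_prod_ne_zero fun B hB => hdet B (by simp [hB]))
      (Commute.list_prod_right _ _ fun B hB => (hpw.1 B hB).1) hZ hQ hW⟩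

theorem exists_eq_mul_prod_ofFn_mul {ι : Type*} {L : ℕ} {M : Matrix (Fin D) (Fin D) ℤ}
    (hM : M.det ≠ 0) {Γ : Fin L → Matrix (Fin D) (Fin D) ℤ} (hΓ : ∀ i, (Γ i).det ≠ 0)
    (hcomm : ∀ i j, Commute (Γ i) (Γ j)) (hcop : ∀ i j, i ≠ j → RightCoprime (Γ i) (Γ j))
    (i₀ : Fin L) {X : Matrix (Fin D) ι ℤ}
    (hX : ∀ i, ∃ Q : Matrix (Fin D) ι ℤ, X = M * Γ i * Q) :
    ∃ W : Matrix (Fin D) ι ℤ, X = M * (List.ofFn Γ).prod * W := by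
  choose Q hQ using hX
  have hY : ∀ i, Γ i₀ * Q i₀ = Γ i * Q i := fun i =>
    eq_of_mul_eq_mul_of_det_ne_zero hM (by rw [← Matrix.mul_assoc, ← Matrix.mul_assoc, ← hQ, ← hQ])
  obtain ⟨W, hW⟩ := exists_eq_list_prod_mul
    (by simpa [List.mem_ofFn] using hΓ)
    (List.pairwise_ofFn.mpr fun i j hij => ⟨hcomm i j, hcop i j hij.ne⟩) (Γ i₀ * Q i₀)
    (by simpa [List.mem_ofFn] using fun i => ⟨Q i, hY i⟩)
  exact ⟨W, by rw [hQ i₀, Matrix.mul_assoc, hW, Matrix.mul_assoc]⟩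

theorem mem_LAT_iff_exists_replicateCol_eq_mul {A : Matrix (Fin D) (Fin D) ℤ} {v : Fin D → ℤ} :
    v ∈ LAT A ↔ ∃ Q : Matrix (Fin D) Unit ℤ, replicateCol Unit v = A * Q := by
  constructor
  · rintro ⟨n, rfl⟩
    exact ⟨replicateCol Unit n, replicateCol_mulVec A n⟩
  · rintro ⟨Q, hQ⟩
    exact ⟨fun k => Q k (), funext fun k => by
      simpa [mulVec, dotProduct, mul_apply] using congr_fun₂ hQ k ()⟩

theorem eq_of_mem_NSet_of_sub_mem_LAT {R : Matrix (Fin D) (Fin D) ℤ} (hR : R.det ≠ 0)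
    {m m' : Fin D → ℤ} (hm : m ∈ NSet R) (hm' : m' ∈ NSet R) (h : m - m' ∈ LAT R) : m = m' := by
  obtain ⟨x, hx, hxm⟩ := hm
  obtain ⟨x', hx', hxm'⟩ := hm'
  obtain ⟨n, hn⟩ := h
  have hRq : (R.map (Int.cast : ℤ → ℚ)).det ≠ 0 := by
    rw [show R.map (Int.cast : ℤ → ℚ) = (Int.castRingHom ℚ).mapMatrix R from rfl,
      ← RingHom.map_det, eq_intCast]
    exact_mod_cast hR
  have hxn : x - x' = fun j => (n j : ℚ) := by
    have hcast : R.map (Int.cast : ℤ → ℚ) *ᵥ (fun j => (n j : ℚ)) = fun k => ((R *ᵥ n) k : ℚ) :=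
      funext fun k => ((Int.castRingHom ℚ).map_mulVec R n k).symm
    refine mulVec_injective_of_det_ne_zero hRq ?_
    rw [mulVec_sub, hxm, hxm', hcast, ← hn]
    funext k
    simp
  have hn0 : n = 0 := funext fun j => by
    have hj := congrFun hxn j
    have : (n j : ℚ) < 1 ∧ -1 < (n j : ℚ) := by
      simp only [Pi.sub_apply] at hj
      constructor <;> linarith [hx j, hx' j]
    have h₁ : n j < 1 := by exact_mod_cast this.1
    have h₂ : -1 < n j := by exact_mod_cast this.2
    simp only [Pi.zero_apply]
    omega
  rwa [hn0, mulVec_zero, sub_eq_zero] at hn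

end Divisibility

theorem stmt8_general {D L : ℕ} (hL : 1 ≤ L)
    (M : Matrix (Fin D) (Fin D) ℤ) (hM : M.det ≠ 0)
    (Γ : Fin L → Matrix (Fin D) (Fin D) ℤ) (hΓ : ∀ i, (Γ i).det ≠ 0)
    (hcomm2 : ∀ i j, Γ i * Γ j = Γ j * Γ i)
    (hcop2 : ∀ i j, i ≠ j → MatCoprime (Γ i) (Γ j))
    (U : Matrix (Fin D) (Fin D) ℤ) (hU : Unimod U)
    (R : Matrix (Fin D) (Fin D) ℤ) (hR : R = M * (List.ofFn Γ).prod * U) :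
    IsLCRM (fun i => M * Γ i) R ∧
      ∀ (m m' : Fin D → ℤ) (r : Fin L → Fin D → ℤ),
        m ∈ NSet R → m' ∈ NSet R →
        (∀ i, IsRem (M * Γ i) m (r i)) →
        (∀ i, IsRem (M * Γ i) m' (r i)) → m = m' := by
  have hUunit := (unimod_iff_isUnit U).mp hU
  obtain ⟨V, hUV⟩ := hUunit.exists_right_inv
  have hRdet : R.det ≠ 0 := by
    rw [hR, det_mul, det_mul]
    exact mul_ne_zero (mul_ne_zero hM (det_list_prod_ne_zero (by simpa [List.mem_ofFn] using hΓ)))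
      ((isUnit_iff_isUnit_det U).mp hUunit).ne_zero
  have hdvd : ∀ {ι : Type} (X : Matrix (Fin D) ι ℤ),
      (∀ i, ∃ Q : Matrix (Fin D) ι ℤ, X = M * Γ i * Q) → ∃ W : Matrix (Fin D) ι ℤ, X = R * W := by
    intro ι X hX
    obtain ⟨W, hW⟩ := exists_eq_mul_prod_ofFn_mul hM hΓ hcomm2 (fun i j h => (hcop2 i j h).2)
      ⟨0, hL⟩ hX
    exact ⟨V * W, by rw [hW, hR, Matrix.mul_assoc _ U, ← Matrix.mul_assoc U, hUV, Matrix.one_mul]⟩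
  refine ⟨⟨⟨hRdet, fun i => ?_⟩, fun C hC => hdvd C hC.2⟩,
    fun m m' r hm hm' hr hr' => eq_of_mem_NSet_of_sub_mem_LAT hRdet hm hm' ?_⟩
  · obtain ⟨T, hT⟩ := exists_list_prod_eq_mul_of_mem
      (List.pairwise_ofFn.mpr fun i j _ => hcomm2 i j) (List.mem_ofFn.mpr ⟨i, rfl⟩)
    exact ⟨T * U, by rw [hR, hT, Matrix.mul_assoc, Matrix.mul_assoc, Matrix.mul_assoc]⟩
  · refine mem_LAT_iff_exists_replicateCol_eq_mul.mpr (hdvd _ fun i => ?_)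
    obtain ⟨a, ha⟩ := (hr i).2
    obtain ⟨b, hb⟩ := (hr' i).2
    exact mem_LAT_iff_exists_replicateCol_eq_mul.mp ⟨a - b, by rw [mulVec_sub, ← ha, ← hb]; abel⟩

/-- for `M, Γ₁,…,Γ_L` pairwise commutative and coprime,
`R = MΓ₁⋯Γ_L U` is an lcrm of the moduli `MΓᵢ`, and every `m ∈ 𝒩(R)` is uniquely
determined by its remainders. -/
theorem stmt8 {D L : ℕ} (hL : 1 ≤ L)
    (M : Matrix (Fin D) (Fin D) ℤ) (hM : M.det ≠ 0)
    (Γ : Fin L → Matrix (Fin D) (Fin D) ℤ) (hΓ : ∀ i, (Γ i).det ≠ 0)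
    (hcomm1 : ∀ i, M * Γ i = Γ i * M)
    (hcop1 : ∀ i, MatCoprime M (Γ i))
    (hcomm2 : ∀ i j, Γ i * Γ j = Γ j * Γ i)
    (hcop2 : ∀ i j, i ≠ j → MatCoprime (Γ i) (Γ j))
    (U : Matrix (Fin D) (Fin D) ℤ) (hU : Unimod U)
    (R : Matrix (Fin D) (Fin D) ℤ) (hR : R = M * (List.ofFn Γ).prod * U) :
    IsLCRM (fun i => M * Γ i) R ∧
      ∀ (m m' : Fin D → ℤ) (r : Fin L → Fin D → ℤ),
        m ∈ NSet R → m' ∈ NSet R →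
        (∀ i, IsRem (M * Γ i) m (r i)) →
        (∀ i, IsRem (M * Γ i) m' (r i)) → m = m' :=
  stmt8_general hL M hM Γ hΓ hcomm2 hcop2 U hU R hR
end

section
/- Let M₁, M₂, …, M_L be D×D nonsingular integer matrices that are pairwise commutative and pairwise coprime, and let R = M₁M₂⋯M_L U for any unimodular matrix U, which is an lcrm of the M_i. For each i set W_i = M₁⋯M_{i−1}M_{i+1}⋯M_L and let Ŵ_i be an integer matrix satisfying W_iŴ_i + M_iQ_i = I for some integer matrix Q_i. Then every integer vector m ∈ 𝒩(R) is uniquely reconstructed from its remainders r_i = ⟨m⟩_{M_i} as m = ⟨ Σ_{i=1}^{L} W_iŴ_i r_i ⟩_R. (CC MD-CRT for integer vectors.) -/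
open Matrix

/-
Write `v = Σᵢ WᵢŴᵢ rᵢ − m`. Since `WᵢŴᵢ ≡ 1` modulo `Mᵢ` and `Mᵢ` divides `Wⱼ` for `j ≠ i`, each
`Mᵢ` divides `v`. Commuting moduli that satisfy a Bézout identity `A X + B Y = 1` have
`LAT A ∩ LAT B = LAT (A B)`: multiplication by `A` is onto `ℤ^D / LAT B` by Bézout, hence injective
because that quotient is finitely generated. Multiplying in one modulus at a time gives
`v ∈ LAT (M₁ ⋯ M_L)`, which equals `LAT R` because `U` is unimodular.
-/

open LinearMap in
theorem Module.End.range_inf_range_le_range_mul {R M : Type*} [CommRing R] [AddCommGroup M]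
    [Module R M] [Module.Finite R M] {f g f' g' : Module.End R M} (hfg : Commute f g)
    (hbez : f * f' + g * g' = 1) : range f ⊓ range g ≤ range (f * g) := by
  rintro _ ⟨⟨a, rfl⟩, b, hb⟩
  have hstable : range g ≤ (range g).comap f := by
    rintro _ ⟨c, rfl⟩
    exact ⟨f c, by rw [← Module.End.mul_apply, ← hfg.eq, Module.End.mul_apply]⟩
  set φ := (range g).mapQ (range g) f hstable
  have hsurj : Function.Surjective φ := by
    intro y
    obtain ⟨x, rfl⟩ := Submodule.Quotient.mk_surjective _ y
    refine ⟨Submodule.Quotient.mk (f' x), ?_⟩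
    rw [Submodule.mapQ_apply, Submodule.Quotient.eq]
    refine ⟨-g' x, ?_⟩
    have hx := congrArg (· x) hbez
    simp only [LinearMap.add_apply, Module.End.mul_apply, Module.End.one_apply] at hx
    rw [map_neg, eq_sub_of_add_eq' hx, neg_sub]
  have hinj := OrzechProperty.injective_of_surjective_endomorphism φ hsurj
  obtain ⟨c, rfl⟩ : a ∈ range g := by
    rw [← Submodule.Quotient.mk_eq_zero]
    refine hinj ?_
    rw [map_zero, Submodule.mapQ_apply, ← hb, Submodule.Quotient.mk_eq_zero]
    exact ⟨b, rfl⟩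
  exact ⟨c, rfl⟩

theorem List.exists_prod_eq_mul_of_mem {α : Type*} [Monoid α] [DecidableEq α] {l : List α}
    (hl : l.Pairwise Commute) {a : α} (ha : a ∈ l) : ∃ b, l.prod = a * b :=
  ⟨(l.erase a).prod, by rw [(List.perm_cons_erase ha).prod_eq' hl, List.prod_cons]⟩

namespace Matrix

open LinearMap

variable {n R : Type*} [Fintype n] [DecidableEq n] [CommRing R]

theorem range_mulVecLin_inf_le_mul {A B X Y : Matrix n n R} (hAB : Commute A B)
    (hbez : A * X + B * Y = 1) :
    range A.mulVecLin ⊓ range B.mulVecLin ≤ range (A * B).mulVecLin := by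
  have hbez' : toLinAlgEquiv' A * toLinAlgEquiv' X + toLinAlgEquiv' B * toLinAlgEquiv' Y = 1 := by
    rw [← map_mul, ← map_mul, ← map_add, hbez, map_one]
  have h := Module.End.range_inf_range_le_range_mul (hAB.map toLinAlgEquiv') hbez'
  rwa [← map_mul] at h

theorem mem_range_mulVecLin_list_prod {l : List (Matrix n n R)} (hl : l.Pairwise Commute)
    (hbez : ∀ i (hi : i < l.length), ∃ X Y, (l.eraseIdx i).prod * X + l[i] * Y = 1)
    {v : n → R} (hv : ∀ A ∈ l, v ∈ range A.mulVecLin) : v ∈ range l.prod.mulVecLin := by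
  induction l with
  | nil => exact ⟨v, one_mulVec v⟩
  | cons A t ih =>
    obtain ⟨hAt, ht⟩ := List.pairwise_cons.1 hl
    have hA_erase (i : ℕ) : Commute A (t.eraseIdx i).prod :=
      Commute.list_prod_right _ _ fun B hB => hAt B ((List.eraseIdx_sublist _ _).subset hB)
    have hv_t : v ∈ range t.prod.mulVecLin := by
      refine ih ht (fun i hi => ?_) fun B hB => hv B (List.mem_cons_of_mem _ hB)
      obtain ⟨X, Y, h⟩ := hbez (i + 1) (by simpa using hi)
      refine ⟨A * X, Y, ?_⟩
      rwa [List.eraseIdx_cons_succ, List.prod_cons, (hA_erase i).eq, mul_assoc] at h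
    have hA_prod : Commute A t.prod := Commute.list_prod_right _ _ hAt
    obtain ⟨X, Y, h⟩ := hbez 0 (by simp)
    rw [List.prod_cons, hA_prod.eq]
    exact range_mulVecLin_inf_le_mul hA_prod.symm h ⟨hv_t, hv A List.mem_cons_self⟩

theorem sum_mulVec_sub_mem_range {ι : Type*} [Fintype ι] [DecidableEq ι] {A : Matrix n n R}
    {E : ι → Matrix n n R} {i : ι} (hi : ∃ Q, E i + A * Q = 1)
    (hj : ∀ j ≠ i, ∃ K, E j = A * K) {m : n → R} {r : ι → n → R}
    (hr : m - r i ∈ range A.mulVecLin) : ∑ j, E j *ᵥ r j - m ∈ range A.mulVecLin := by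
  obtain ⟨Q, hQ⟩ := hi
  have hEi : E i *ᵥ r i - m = -(m - r i) - A.mulVecLin (Q *ᵥ r i) := by
    rw [eq_sub_of_add_eq hQ, mulVecLin_apply, sub_mulVec, one_mulVec, mulVec_mulVec]
    abel
  rw [← Finset.add_sum_erase _ _ (Finset.mem_univ i), add_sub_right_comm, hEi]
  refine add_mem (sub_mem (neg_mem hr) ⟨_, rfl⟩) (Submodule.sum_mem _ fun j hji => ?_)
  obtain ⟨K, hK⟩ := hj j (Finset.ne_of_mem_erase hji)
  exact ⟨K *ᵥ r j, by rw [mulVecLin_apply, mulVec_mulVec, hK]⟩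

end Matrix

theorem mem_LAT_iff {D : ℕ} {A : Matrix (Fin D) (Fin D) ℤ} {v : Fin D → ℤ} :
    v ∈ LAT A ↔ v ∈ LinearMap.range A.mulVecLin :=
  ⟨fun ⟨w, h⟩ => ⟨w, h.symm⟩, fun ⟨w, h⟩ => ⟨w, h.symm⟩⟩

theorem LAT_mul_of_unimod {D : ℕ} {A U : Matrix (Fin D) (Fin D) ℤ} (hU : Unimod U) :
    LAT (A * U) = LAT A := by
  ext v
  constructor
  · rintro ⟨w, rfl⟩
    exact ⟨U *ᵥ w, (mulVec_mulVec _ _ _).symm⟩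
  · rintro ⟨w, rfl⟩
    refine ⟨U⁻¹ *ᵥ w, ?_⟩
    rw [mulVec_mulVec, mul_assoc, mul_nonsing_inv _ (Int.isUnit_iff.2 hU), mul_one]

theorem stmt10_general {D L : ℕ}
    (M : Fin L → Matrix (Fin D) (Fin D) ℤ)
    (hcomm : ∀ i j, M i * M j = M j * M i)
    (U : Matrix (Fin D) (Fin D) ℤ) (hU : Unimod U)
    (R : Matrix (Fin D) (Fin D) ℤ) (hR : R = (List.ofFn M).prod * U)
    (W Wh : Fin L → Matrix (Fin D) (Fin D) ℤ)
    (hW : ∀ i, W i = ((List.ofFn M).eraseIdx i.val).prod)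
    (hWh : ∀ i, ∃ Q : Matrix (Fin D) (Fin D) ℤ, W i * Wh i + M i * Q = 1)
    (m : Fin D → ℤ) (hm : m ∈ NSet R)
    (r : Fin L → Fin D → ℤ) (hr : ∀ i, IsRem (M i) m (r i)) :
    IsRem R (∑ i, (W i * Wh i).mulVec (r i)) m := by
  have hpw : (List.ofFn M).Pairwise Commute := List.pairwise_ofFn.2 fun i j _ => hcomm i j
  have hdvd (i j : Fin L) (hji : j ≠ i) : ∃ K, W j * Wh j = M i * K := by
    have hi : M i ∈ (List.ofFn M).eraseIdx j :=
      List.mem_eraseIdx_iff_getElem.2 ⟨i, by simp, Fin.val_ne_of_ne hji.symm, List.getElem_ofFn ..⟩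
    obtain ⟨K, hK⟩ :=
      List.exists_prod_eq_mul_of_mem (hpw.sublist (List.eraseIdx_sublist _ j)) hi
    exact ⟨K * Wh j, by rw [hW j, hK, mul_assoc]⟩
  have hmod (i : Fin L) : ∑ j, (W j * Wh j) *ᵥ r j - m ∈ LinearMap.range (M i).mulVecLin :=
    Matrix.sum_mulVec_sub_mem_range (E := fun j => W j * Wh j) (hWh i) (hdvd i)
      (mem_LAT_iff.1 (hr i).2)
  refine ⟨hm, ?_⟩
  rw [hR, LAT_mul_of_unimod hU, mem_LAT_iff]
  refine Matrix.mem_range_mulVecLin_list_prod hpw (fun i hi => ?_) ?_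
  · obtain ⟨Q, hQ⟩ := hWh ⟨i, by simpa using hi⟩
    exact ⟨Wh _, Q, by simpa [hW] using hQ⟩
  · simpa only [List.forall_mem_ofFn_iff] using hmod

/-- CC MD-CRT for integer vectors — pairwise commutative and coprime
moduli; `m = ⟨ Σᵢ Wᵢ Ŵᵢ rᵢ ⟩_R`. -/
theorem stmt10 {D L : ℕ} (hL : 1 ≤ L)
    (M : Fin L → Matrix (Fin D) (Fin D) ℤ) (hM : ∀ i, (M i).det ≠ 0)
    (hcomm : ∀ i j, M i * M j = M j * M i)
    (hcop : ∀ i j, i ≠ j → MatCoprime (M i) (M j))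
    (U : Matrix (Fin D) (Fin D) ℤ) (hU : Unimod U)
    (R : Matrix (Fin D) (Fin D) ℤ) (hR : R = (List.ofFn M).prod * U)
    (W Wh : Fin L → Matrix (Fin D) (Fin D) ℤ)
    (hW : ∀ i, W i = ((List.ofFn M).eraseIdx i.val).prod)
    (hWh : ∀ i, ∃ Q : Matrix (Fin D) (Fin D) ℤ, W i * Wh i + M i * Q = 1)
    (m : Fin D → ℤ) (hm : m ∈ NSet R)
    (r : Fin L → Fin D → ℤ) (hr : ∀ i, IsRem (M i) m (r i)) :
    IsRem R (∑ i, (W i * Wh i).mulVec (r i)) m :=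
  stmt10_general M hcomm U hU R hR W Wh hW hWh m hm r hr
end
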